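/- Fix δ > 0 and a real constant m. Let T^+_α be the self-adjoint operator in L²(0,δ) associated with the quadratic form τ^+_α(f,f) = ∫₀^δ |f'(t)|² dt − (α + m)|f(0)|² on the domain {f ∈ H¹(0,δ) : f(δ) = 0}, and let ψ_α be an L²-normalized eigenfunction corresponding to the lowest eigenvalue E₁(T^+_α). Then |ψ_α(0)|² = O(α) as α → +∞. -/

import Mathlib

/-! Let `-f'' = E f` on `[0, δ]` with `f'(0) = -a f(0)` (`a = α + m`), `f(δ) = 0` and
`∫ f² = 1`, and write `P = f(0)²` and `F = ∫ f'²`. Green's identity gives `F = a P + E`;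
integrating the conserved energy `f'² + E f²` gives `F + E = δ (a² + E) P`; and
`0 ≤ ∫ (f' + 2 a f)²` gives `2 a P ≤ F + 4 a²`. If `E ≤ 0`, the first and last give `P ≤ 4 a`.
If `E > 0`, eliminating `F` gives `E (2 - δ P) = a P (δ a - 1)`, so `P ≤ 2 / δ` once `δ a ≥ 1`.
Hence `P ≤ 4 a + 2 / δ ≤ 8 α` for large `α`. -/

open MeasureTheory Filter Topology

noncomputable section

/-- Rayleigh quotient of the quadratic form
`τ⁺_α(f) = ∫₀^δ |f'(t)|² dt − (α+m)|f(0)|²` of the operator `T⁺_α` in `L²(0,δ)`. -/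
def rayleighT (δ m α : ℝ) (f : ℝ → ℝ) : ℝ :=
  ((∫ t in Set.Ioo (0 : ℝ) δ, deriv f t ^ 2) - (α + m) * f 0 ^ 2) /
    ∫ t in Set.Ioo (0 : ℝ) δ, f t ^ 2

/-- `j`-th eigenvalue (`j ≥ 1`) of the operator `T⁺_α` in `L²(0,δ)` associated with the
form `τ⁺_α(f) = ∫₀^δ |f'(t)|² dt − (α+m)|f(0)|²` on `{f ∈ H¹(0,δ) : f(δ) = 0}`, via the
Courant–Fischer min-max principle over `j`-dimensional subspaces of Lipschitz functions
vanishing at `δ` (a form core). -/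
def oneDimEV (δ m α : ℝ) (j : ℕ) : ℝ :=
  sInf { c : ℝ | ∃ V : Submodule ℝ (ℝ → ℝ),
    Module.finrank ℝ V = j ∧
    (∀ f ∈ V, (∃ K, LipschitzWith K f) ∧ f δ = 0) ∧
    (∀ f ∈ V, f ≠ 0 → 0 < ∫ t in Set.Ioo (0 : ℝ) δ, f t ^ 2) ∧
    c = sSup { r : ℝ | ∃ f ∈ V, f ≠ 0 ∧ r = rayleighT δ m α f } }

/-- `f` is an `L²`-normalized eigenfunction of `T⁺_α` for its lowest eigenvalue
`E₁(T⁺_α)`: it solves `−f'' = E₁ f` on `[0,δ]` with the Robin condition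
`f'(0) = −(α+m) f(0)` and the Dirichlet condition `f(δ) = 0`, and `∫₀^δ f² = 1`. -/
def IsGroundState (δ m α : ℝ) (f : ℝ → ℝ) : Prop :=
  (∃ f' : ℝ → ℝ,
    (∀ t ∈ Set.Icc (0 : ℝ) δ, HasDerivAt f (f' t) t) ∧
    (∀ t ∈ Set.Icc (0 : ℝ) δ, HasDerivAt f' (-(oneDimEV δ m α 1) * f t) t) ∧
    f' 0 = -(α + m) * f 0) ∧
  f δ = 0 ∧ (∫ t in Set.Ioo (0 : ℝ) δ, f t ^ 2) = 1

open Set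

section RobinDirichletEigenfunction

variable {δ E a : ℝ} {f f' : ℝ → ℝ}

theorem integral_sq_deriv_eq_of_robin_dirichlet (hδ : 0 ≤ δ)
    (hf : ∀ t ∈ Icc 0 δ, HasDerivAt f (f' t) t) (hf' : ∀ t ∈ Icc 0 δ, HasDerivAt f' (-E * f t) t)
    (h0 : f' 0 = -a * f 0) (hδf : f δ = 0) :
    ∫ t in 0..δ, f' t ^ 2 = a * f 0 ^ 2 + E * ∫ t in 0..δ, f t ^ 2 := by
  rw [← uIcc_of_le hδ] at hf hf'
  have hparts := intervalIntegral.integral_mul_deriv_eq_deriv_mul hf hf'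
    (HasDerivAt.continuousOn hf').intervalIntegrable
    (continuousOn_const.mul (HasDerivAt.continuousOn hf)).intervalIntegrable
  have hE : ∫ t in 0..δ, f t * (-E * f t) = -E * ∫ t in 0..δ, f t ^ 2 := by
    rw [← intervalIntegral.integral_const_mul]; congr 1; ext t; ring
  simp only [hE, ← sq, hδf, h0] at hparts
  linarith

theorem sq_deriv_add_mul_sq_eq_at_zero
    (hf : ∀ t ∈ Icc 0 δ, HasDerivAt f (f' t) t) (hf' : ∀ t ∈ Icc 0 δ, HasDerivAt f' (-E * f t) t) :
    ∀ t ∈ Icc 0 δ, f' t ^ 2 + E * f t ^ 2 = f' 0 ^ 2 + E * f 0 ^ 2 := by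
  have hderiv : ∀ t ∈ Icc 0 δ, HasDerivAt (fun t => f' t ^ 2 + E * f t ^ 2) 0 t := fun t ht =>
    (((hf' t ht).pow 2).add (((hf t ht).pow 2).const_mul E)).congr_deriv (by push_cast; ring)
  exact constant_of_has_deriv_right_zero (HasDerivAt.continuousOn hderiv)
    fun t ht => (hderiv t (Ico_subset_Icc_self ht)).hasDerivWithinAt

theorem integral_sq_deriv_add_mul_integral_sq (hδ : 0 ≤ δ)
    (hf : ∀ t ∈ Icc 0 δ, HasDerivAt f (f' t) t) (hf' : ∀ t ∈ Icc 0 δ, HasDerivAt f' (-E * f t) t) :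
    (∫ t in 0..δ, f' t ^ 2) + E * ∫ t in 0..δ, f t ^ 2 = δ * (f' 0 ^ 2 + E * f 0 ^ 2) := by
  have hfc := HasDerivAt.continuousOn hf
  have hf'c := HasDerivAt.continuousOn hf'
  rw [← intervalIntegral.integral_const_mul, ← intervalIntegral.integral_add
      (ContinuousOn.intervalIntegrable_of_Icc hδ (by fun_prop))
      (ContinuousOn.intervalIntegrable_of_Icc hδ (by fun_prop)),
    intervalIntegral.integral_congr (g := fun _ => f' 0 ^ 2 + E * f 0 ^ 2)
      fun t ht => sq_deriv_add_mul_sq_eq_at_zero hf hf' t (by rwa [uIcc_of_le hδ] at ht),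
    intervalIntegral.integral_const, smul_eq_mul, sub_zero]

theorem mul_sq_le_integral_sq_deriv_add (hδ : 0 ≤ δ)
    (hf : ∀ t ∈ Icc 0 δ, HasDerivAt f (f' t) t) (hf'c : ContinuousOn f' (Icc 0 δ)) (hδf : f δ = 0)
    (c : ℝ) :
    c * f 0 ^ 2 ≤ (∫ t in 0..δ, f' t ^ 2) + c ^ 2 * ∫ t in 0..δ, f t ^ 2 := by
  have hfc := HasDerivAt.continuousOn hf
  have hsq : ∀ t ∈ Icc 0 δ, HasDerivAt (fun t => f t ^ 2) (2 * f t * f' t) t := fun t ht =>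
    ((hf t ht).pow 2).congr_deriv (by push_cast; ring)
  have hcross : ∫ t in 0..δ, 2 * f t * f' t = -f 0 ^ 2 := by
    rw [intervalIntegral.integral_eq_sub_of_hasDerivAt_of_le hδ (HasDerivAt.continuousOn hsq)
      (fun t ht => hsq t (Ioo_subset_Icc_self ht))
      (ContinuousOn.intervalIntegrable_of_Icc hδ (by fun_prop)), hδf]
    ring
  calc c * f 0 ^ 2 = ∫ t in 0..δ, -c * (2 * f t * f' t) := by
        rw [intervalIntegral.integral_const_mul, hcross]; ring
    _ ≤ ∫ t in 0..δ, (f' t ^ 2 + c ^ 2 * f t ^ 2) :=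
        intervalIntegral.integral_mono_on hδ
          (ContinuousOn.intervalIntegrable_of_Icc hδ (by fun_prop))
          (ContinuousOn.intervalIntegrable_of_Icc hδ (by fun_prop))
          fun t _ => by nlinarith [sq_nonneg (f' t + c * f t)]
    _ = (∫ t in 0..δ, f' t ^ 2) + c ^ 2 * ∫ t in 0..δ, f t ^ 2 := by
        rw [intervalIntegral.integral_add (ContinuousOn.intervalIntegrable_of_Icc hδ (by fun_prop))
          (ContinuousOn.intervalIntegrable_of_Icc hδ (by fun_prop)),
          intervalIntegral.integral_const_mul]

theorem sq_le_of_robin_dirichlet_eigenfunction (hδ : 0 < δ)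
    (hf : ∀ t ∈ Icc 0 δ, HasDerivAt f (f' t) t) (hf' : ∀ t ∈ Icc 0 δ, HasDerivAt f' (-E * f t) t)
    (h0 : f' 0 = -a * f 0) (hδf : f δ = 0) (hnorm : ∫ t in Ioo 0 δ, f t ^ 2 = 1)
    (ha : 1 / δ ≤ a) :
    f 0 ^ 2 ≤ 4 * a + 2 / δ := by
  have hnorm' : ∫ t in 0..δ, f t ^ 2 = 1 := by
    rw [intervalIntegral.integral_of_le hδ.le, integral_Ioc_eq_integral_Ioo, hnorm]
  have green := integral_sq_deriv_eq_of_robin_dirichlet hδ.le hf hf' h0 hδf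
  have energy := integral_sq_deriv_add_mul_integral_sq hδ.le hf hf'
  have young := mul_sq_le_integral_sq_deriv_add hδ.le hf (HasDerivAt.continuousOn hf') hδf (2 * a)
  rw [hnorm'] at green energy young
  rw [h0] at energy
  have hδa : 1 ≤ δ * a := by rwa [div_le_iff₀' hδ] at ha
  have ha0 : 0 < a := lt_of_lt_of_le (by positivity) ha
  have hP := sq_nonneg (f 0)
  have hδ' : 0 < 2 / δ := by positivity
  rcases le_or_gt E 0 with hE | hE
  · have h4a : a * f 0 ^ 2 ≤ a * (4 * a) := by linarith
    linarith [le_of_mul_le_mul_left h4a ha0]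
  · have hE2 : E * (2 - δ * f 0 ^ 2) = a * f 0 ^ 2 * (δ * a - 1) := by
      linear_combination energy - green
    have hrhs : 0 ≤ a * f 0 ^ 2 * (δ * a - 1) := mul_nonneg (by positivity) (by linarith)
    have hδP : δ * f 0 ^ 2 ≤ 2 := by
      linarith [(mul_nonneg_iff_of_pos_left hE).mp (hE2 ▸ hrhs)]
    linarith [(le_div_iff₀' hδ).mpr hδP]

end RobinDirichletEigenfunction

/-- **Lemma 2, boundary value bound.** If `ψ_α` is a normalized ground
state of `T⁺_α`, then `|ψ_α(0)|² = O(α)` as `α → +∞`. -/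
theorem oneDim_ground_state_boundary_value (δ m : ℝ) (hδ : 0 < δ)
    (ψ : ℝ → ℝ → ℝ) (hψ : ∀ α : ℝ, IsGroundState δ m α (ψ α)) :
    ∃ C α₀ : ℝ, 0 < C ∧ ∀ α : ℝ, α₀ ≤ α → ψ α 0 ^ 2 ≤ C * α := by
  refine ⟨8, |m| + 1 / δ, by norm_num, fun α hα => ?_⟩
  obtain ⟨⟨ψ', hψ', hψ'', h0⟩, hδψ, hnorm⟩ := hψ α
  have hδ' : 0 < 1 / δ := by positivity
  have ha : 1 / δ ≤ α + m := by linarith [neg_abs_le m]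
  have hbound := sq_le_of_robin_dirichlet_eigenfunction hδ hψ' hψ'' h0 hδψ hnorm ha
  have hδ2 : 2 / δ = 2 * (1 / δ) := by ring
  linarith [le_abs_self m]

end
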